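/- arXiv:1808.10058 — 5 statements merged into one kernel-verified Lean document; each statement's English description precedes it below -/
import Mathlib

section
/- Let a,b,c,d be fixed elements of a commutative ring, and for j = 1,2 let N_j be the 3x3 matrix with rows (u_j, -a*d*y_j, -a*d*x_j - b*d*y_j), (x_j, u_j - b*x_j - c*y_j, -c*x_j - d*y_j), (y_j, a*x_j, u_j - c*y_j). Then N_1*N_2 = N_3 where N_3 has the same shape with u3 = u1*u2 - a*d*x2*y1 - a*d*x1*y2 - b*d*y1*y2, x3 = u1*x2 + u2*x1 - b*x1*x2 - c*x1*y2 - c*x2*y1 - d*y1*y2, y3 = u1*y2 + u2*y1 + a*x1*x2 - c*y1*y2. -/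
theorem cubic_matrix_mul {R : Type*} [CommRing R] (a b c d u1 x1 y1 u2 x2 y2 : R) :
    (!![u1, -a * d * y1, -a * d * x1 - b * d * y1;
        x1, u1 - b * x1 - c * y1, -c * x1 - d * y1;
        y1, a * x1, u1 - c * y1] : Matrix (Fin 3) (Fin 3) R) *
      !![u2, -a * d * y2, -a * d * x2 - b * d * y2;
         x2, u2 - b * x2 - c * y2, -c * x2 - d * y2;
         y2, a * x2, u2 - c * y2] =
    (let u3 := u1 * u2 - a * d * x2 * y1 - a * d * x1 * y2 - b * d * y1 * y2
     let x3 := u1 * x2 + u2 * x1 - b * x1 * x2 - c * x1 * y2 - c * x2 * y1 - d * y1 * y2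
     let y3 := u1 * y2 + u2 * y1 + a * x1 * x2 - c * y1 * y2
     !![u3, -a * d * y3, -a * d * x3 - b * d * y3;
        x3, u3 - b * x3 - c * y3, -c * x3 - d * y3;
        y3, a * x3, u3 - c * y3]) := by
  show _ = _
  rw [Matrix.mul_fin_three]
  ext i j
  fin_cases i <;> fin_cases j <;> simp <;> ring
end

section
/- With N_j defined as the 3x3 matrix with rows (u_j, -a*d*y_j, -a*d*x_j - b*d*y_j), (x_j, u_j - b*x_j - c*y_j, -c*x_j - d*y_j), (y_j, a*x_j, u_j - c*y_j) over a commutative ring, matrix multiplication is commutative: N_1*N_2 = N_2*N_1. -/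
/-!
Each `N_j` is `u_j • 1 + x_j • X + y_j • Y` for two matrices `X`, `Y` that depend only on
`a, b, c, d`; and `X` commutes with `Y`, so any two such combinations commute.
-/

theorem Commute.algebraMap_add_smul_add_smul {S A : Type*} [CommSemiring S] [Ring A] [Algebra S A]
    {X Y : A} (hXY : Commute X Y) (u x y u' x' y' : S) :
    Commute (algebraMap S A u + x • X + y • Y) (algebraMap S A u' + x' • X + y' • Y) := by
  have hX : Commute X (algebraMap S A u' + x' • X + y' • Y) :=
    ((Algebra.commute_algebraMap_right u' X).add_right ((Commute.refl X).smul_right x')).add_right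
      (hXY.smul_right y')
  have hY : Commute Y (algebraMap S A u' + x' • X + y' • Y) :=
    ((Algebra.commute_algebraMap_right u' Y).add_right (hXY.symm.smul_right x')).add_right
      ((Commute.refl Y).smul_right y')
  exact ((Algebra.commute_algebraMap_left u _).add_left (hX.smul_left x)).add_left (hY.smul_left y)

namespace CubicMatrix

variable {R : Type*} [CommRing R]

def matX (a b c d : R) : Matrix (Fin 3) (Fin 3) R :=
  !![0, 0, -a * d;
     1, -b, -c;
     0, a, 0]

def matY (a b c d : R) : Matrix (Fin 3) (Fin 3) R :=
  !![0, -a * d, -b * d;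
     0, -c, -d;
     1, 0, -c]

theorem commute_matX_matY (a b c d : R) : Commute (matX a b c d) (matY a b c d) := by
  ext i j
  fin_cases i <;> fin_cases j <;> simp [matX, matY, Matrix.mul_apply, Fin.sum_univ_three] <;> ring

theorem eq_algebraMap_add_smul_add_smul (a b c d u x y : R) :
    !![u, -a * d * y, -a * d * x - b * d * y;
       x, u - b * x - c * y, -c * x - d * y;
       y, a * x, u - c * y] =
      algebraMap R (Matrix (Fin 3) (Fin 3) R) u + x • matX a b c d + y • matY a b c d := by
  ext i j
  fin_cases i <;> fin_cases j <;> simp [matX, matY, Matrix.algebraMap_eq_diagonal] <;> ring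

end CubicMatrix

open CubicMatrix in
theorem cubic_matrix_comm {R : Type*} [CommRing R] (a b c d u1 x1 y1 u2 x2 y2 : R) :
    (!![u1, -a * d * y1, -a * d * x1 - b * d * y1;
        x1, u1 - b * x1 - c * y1, -c * x1 - d * y1;
        y1, a * x1, u1 - c * y1] : Matrix (Fin 3) (Fin 3) R) *
      !![u2, -a * d * y2, -a * d * x2 - b * d * y2;
         x2, u2 - b * x2 - c * y2, -c * x2 - d * y2;
         y2, a * x2, u2 - c * y2] =
    !![u2, -a * d * y2, -a * d * x2 - b * d * y2;
       x2, u2 - b * x2 - c * y2, -c * x2 - d * y2;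
       y2, a * x2, u2 - c * y2] *
      !![u1, -a * d * y1, -a * d * x1 - b * d * y1;
         x1, u1 - b * x1 - c * y1, -c * x1 - d * y1;
         y1, a * x1, u1 - c * y1] := by
  rw [eq_algebraMap_add_smul_add_smul, eq_algebraMap_add_smul_add_smul]
  exact (commute_matX_matY a b c d).algebraMap_add_smul_add_smul u1 x1 y1 u2 x2 y2
end

section
/- The determinant of the 3x3 matrix N with rows (u, -a*d*y, -a*d*x - b*d*y), (x, u - b*x - c*y, -c*x - d*y), (y, a*x, u - c*y) is a multiplicative function of (u,x,y): det applied to the composition (u3,x3,y3) given by u3 = u1*u2 - a*d*x2*y1 - a*d*x1*y2 - b*d*y1*y2, x3 = u1*x2 + u2*x1 - b*x1*x2 - c*x1*y2 - c*x2*y1 - d*y1*y2, y3 = u1*y2 + u2*y1 + a*x1*x2 - c*y1*y2 equals the product of the determinants at (u1,x1,y1) and (u2,x2,y2). -/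
/-! `N(u, x, y)` is the matrix of multiplication by `u + x θ + y η` on the basis `1, θ, η` of a
commutative rank-three algebra, and `(u3, x3, y3)` is the product of `(u1, x1, y1)` and
`(u2, x2, y2)` in that algebra. Hence `N` is multiplicative as a matrix-valued map, and the claim
is `det_mul`. -/

section

variable {R : Type*} [CommRing R]

def cubicMatrix (a b c d u x y : R) : Matrix (Fin 3) (Fin 3) R :=
  !![u, -a * d * y, -a * d * x - b * d * y;
     x, u - b * x - c * y, -c * x - d * y;
     y, a * x, u - c * y]

theorem cubicMatrix_mul (a b c d u1 x1 y1 u2 x2 y2 : R) :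
    cubicMatrix a b c d u1 x1 y1 * cubicMatrix a b c d u2 x2 y2 =
      cubicMatrix a b c d
        (u1 * u2 - a * d * x2 * y1 - a * d * x1 * y2 - b * d * y1 * y2)
        (u1 * x2 + u2 * x1 - b * x1 * x2 - c * x1 * y2 - c * x2 * y1 - d * y1 * y2)
        (u1 * y2 + u2 * y1 + a * x1 * x2 - c * y1 * y2) := by
  rw [cubicMatrix, cubicMatrix, cubicMatrix, Matrix.mul_fin_three]
  congr 1
  simp only [Matrix.vecCons_inj, and_true]
  refine ⟨⟨?_, ?_, ?_⟩, ⟨?_, ?_, ?_⟩, ⟨?_, ?_, ?_⟩⟩ <;> ring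

end

theorem cubic_det_multiplicative {R : Type*} [CommRing R] (a b c d u1 x1 y1 u2 x2 y2 : R) :
    (let N : R → R → R → Matrix (Fin 3) (Fin 3) R := fun u x y =>
       !![u, -a * d * y, -a * d * x - b * d * y;
          x, u - b * x - c * y, -c * x - d * y;
          y, a * x, u - c * y]
     let u3 := u1 * u2 - a * d * x2 * y1 - a * d * x1 * y2 - b * d * y1 * y2
     let x3 := u1 * x2 + u2 * x1 - b * x1 * x2 - c * x1 * y2 - c * x2 * y1 - d * y1 * y2
     let y3 := u1 * y2 + u2 * y1 + a * x1 * x2 - c * y1 * y2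
     (N u3 x3 y3).det = (N u1 x1 y1).det * (N u2 x2 y2).det) := by
  show (cubicMatrix a b c d _ _ _).det =
    (cubicMatrix a b c d _ _ _).det * (cubicMatrix a b c d _ _ _).det
  rw [← cubicMatrix_mul, Matrix.det_mul]
end

section
/- For the binary cubic form C = (a,b,c,d) with Hessian Q and Jacobian covariant F as above, the determinant of the 3x3 matrix N with rows (u, -a*d*y, -a*d*x - b*d*y), (x, u - b*x - c*y, -c*x - d*y), (y, a*x, u - c*y) satisfies, upon substituting u = (t + b*x + 2*c*y)/3 (equivalently writing t = 3u - b*x - 2*c*y for the trace of N): t^3 - 3*t*Q(x,y) + F(x,y) = 27*det(N). -/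
/-- With `t = 3u - bx - 2cy` the trace of `N`, one has
`t³ - 3tQ(x,y) + F(x,y) = 27 det N`, where `Q` is the Hessian and `F` the
Jacobian covariant of the binary cubic form `(a,b,c,d)`. -/
theorem trace_hessian_jacobian_det {R : Type*} [CommRing R] (a b c d u x y : R) :
    (let t := 3 * u - b * x - 2 * c * y
     let Q := (b ^ 2 - 3 * a * c) * x ^ 2 + (b * c - 9 * a * d) * x * y +
       (c ^ 2 - 3 * b * d) * y ^ 2
     let Qx := 2 * (b ^ 2 - 3 * a * c) * x + (b * c - 9 * a * d) * y
     let Qy := (b * c - 9 * a * d) * x + 2 * (c ^ 2 - 3 * b * d) * y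
     let Cx := 3 * a * x ^ 2 + 2 * b * x * y + c * y ^ 2
     let Cy := b * x ^ 2 + 2 * c * x * y + 3 * d * y ^ 2
     let F := -(Qx * Cy - Qy * Cx)
     t ^ 3 - 3 * t * Q + F =
       27 * (!![u, -a * d * y, -a * d * x - b * d * y;
                x, u - b * x - c * y, -c * x - d * y;
                y, a * x, u - c * y] : Matrix (Fin 3) (Fin 3) R).det) := by
  simp [Matrix.det_fin_three]
  ring
end

section
/- Under the map α = u + x*(a*ζ) + y*(a*ζ^2 + b*ζ) ↦ N (the 3x3 matrix with rows (u, -a*d*y, -a*d*x - b*d*y), (x, u - b*x - c*y, -c*x - d*y), (y, a*x, u - c*y)), the field norm N_{K/ℚ}(α) equals det(N). -/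
/-!
Since `[K : ℚ] = 3` is prime and `ζ ∉ ℚ`, the powers `1, ζ, ζ²` form a basis of `K`; the triangular
change of coordinates with diagonal `1, a, a` turns it into the basis `1, aζ, aζ² + bζ`. Reducing
`α · (aζ)` and `α · (aζ² + bζ)` with `aζ³ = -bζ² - cζ - d` shows that `N` is the matrix of
multiplication by `α` in this basis, and the norm is the determinant of that matrix.
-/

open Module IntermediateField

theorem minpoly_natDegree_eq_finrank_of_prime {F K : Type*} [Field F] [Field K] [Algebra F K]
    [FiniteDimensional F K] (hp : (finrank F K).Prime) {ζ : K}
    (hζ : ζ ∉ (⊥ : IntermediateField F K)) : (minpoly F ζ).natDegree = finrank F K := by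
  rcases (isSimpleOrder_of_finrank_prime F K hp).eq_bot_or_eq_top F⟮ζ⟯ with h | h
  · exact absurd (adjoin_simple_eq_bot_iff.mp h) hζ
  · rw [← adjoin.finrank (.of_finite F ζ), h, finrank_top']

theorem linearIndependent_pow_fin {F K : Type*} [Field F] [Ring K] [Algebra F K] {ζ : K} {n : ℕ}
    (hn : (minpoly F ζ).natDegree = n) : LinearIndependent F fun i : Fin n ↦ ζ ^ (i : ℕ) := by
  subst hn
  exact linearIndependent_pow ζ

theorem LinearIndependent.triangular_fin_three {F M : Type*} [CommRing F] [NoZeroDivisors F]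
    [AddCommGroup M] [Module F M] {e : Fin 3 → M} (he : LinearIndependent F e) {a : F} (ha : a ≠ 0) (b : F) :
    LinearIndependent F ![e 0, a • e 1, a • e 2 + b • e 1] := by
  rw [Fintype.linearIndependent_iff] at he ⊢
  intro g hg
  have hcoeff := he ![g 0, a * g 1 + b * g 2, a * g 2] <| by
    rw [← hg]
    simp only [Fin.sum_univ_three, Matrix.cons_val_zero, Matrix.cons_val_one, Matrix.cons_val_two,
      Matrix.head_cons, Matrix.tail_cons]
    module
  have h0 : g 0 = 0 := hcoeff 0
  have h2 : g 2 = 0 := (mul_eq_zero.mp (hcoeff 2)).resolve_left ha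
  have h1 : g 1 = 0 := by simpa [h2, ha] using hcoeff 1
  intro i
  fin_cases i <;> assumption

theorem Algebra.leftMulMatrix_eq_of_mul_eq_sum {ι R S : Type*} [Fintype ι] [DecidableEq ι]
    [CommRing R] [Ring S] [Algebra R S] (B : Basis ι R S) {α : S} {N : Matrix ι ι R}
    (h : ∀ j, α * B j = ∑ k, N k j • B k) : Algebra.leftMulMatrix B α = N := by
  ext i j
  rw [Algebra.leftMulMatrix_eq_repr_mul, h j, Basis.repr_sum_self]

section CubicFamily

variable {F K : Type*} [CommRing F] [CommRing K] [Algebra F K]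

def cubicFamily (a b : F) (ζ : K) : Fin 3 → K :=
  ![1, algebraMap F K a * ζ, algebraMap F K a * ζ ^ 2 + algebraMap F K b * ζ]

def cubicMulMatrix (a b c d u x y : F) : Matrix (Fin 3) (Fin 3) F :=
  !![u, -a * d * y, -a * d * x - b * d * y;
     x, u - b * x - c * y, -c * x - d * y;
     y, a * x, u - c * y]

theorem mul_cubicFamily {a b c d : F} {ζ : K}
    (hζ : algebraMap F K a * ζ ^ 3 + algebraMap F K b * ζ ^ 2 +
      algebraMap F K c * ζ + algebraMap F K d = 0) (u x y : F) (j : Fin 3) :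
    (algebraMap F K u + algebraMap F K x * (algebraMap F K a * ζ) +
        algebraMap F K y * (algebraMap F K a * ζ ^ 2 + algebraMap F K b * ζ)) * cubicFamily a b ζ j =
      ∑ k, cubicMulMatrix a b c d u x y k j • cubicFamily a b ζ k := by
  fin_cases j <;>
    simp only [cubicFamily, cubicMulMatrix, Matrix.of_apply, Matrix.cons_val', Matrix.cons_val,
      Matrix.cons_val_zero, Matrix.cons_val_one, Matrix.cons_val_fin_one, Fin.sum_univ_three,
      Fin.zero_eta, Fin.mk_one, Fin.reduceFinMk, Algebra.smul_def, map_sub, map_neg, map_mul, mul_one]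
  · linear_combination algebraMap F K y * algebraMap F K a * hζ
  · linear_combination (algebraMap F K x * algebraMap F K a +
      algebraMap F K y * (algebraMap F K a * ζ + algebraMap F K b)) * hζ

end CubicFamily

theorem linearIndependent_cubicFamily {F K : Type*} [Field F] [CommRing K] [Algebra F K] {a : F}
    (ha : a ≠ 0) (b : F) {ζ : K} (hdeg : (minpoly F ζ).natDegree = 3) :
    LinearIndependent F (cubicFamily a b ζ) := by
  have := (linearIndependent_pow_fin hdeg).triangular_fin_three ha b
  simpa [cubicFamily, Algebra.smul_def] using this

theorem norm_eq_det_cubic_field_general {K : Type*} [Field K] [Algebra ℚ K]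
    (hdim : Module.finrank ℚ K = 3)
    (a b c d : ℚ) (ha : a ≠ 0) (ζ : K)
    (hζ : algebraMap ℚ K a * ζ ^ 3 + algebraMap ℚ K b * ζ ^ 2 +
      algebraMap ℚ K c * ζ + algebraMap ℚ K d = 0)
    (hgen : ∀ q : ℚ, ζ ≠ algebraMap ℚ K q)
    (u x y : ℚ) :
    Algebra.norm ℚ
        (algebraMap ℚ K u + algebraMap ℚ K x * (algebraMap ℚ K a * ζ) +
          algebraMap ℚ K y * (algebraMap ℚ K a * ζ ^ 2 + algebraMap ℚ K b * ζ)) =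
      (!![u, -a * d * y, -a * d * x - b * d * y;
          x, u - b * x - c * y, -c * x - d * y;
          y, a * x, u - c * y] : Matrix (Fin 3) (Fin 3) ℚ).det := by
  have : FiniteDimensional ℚ K := Module.finite_of_finrank_eq_succ hdim
  have hζ_irrat : ζ ∉ (⊥ : IntermediateField ℚ K) := by
    rintro ⟨q, hq⟩
    exact hgen q hq.symm
  have hdeg : (minpoly ℚ ζ).natDegree = 3 :=
    hdim ▸ minpoly_natDegree_eq_finrank_of_prime (hdim ▸ Nat.prime_three) hζ_irrat
  have hcard : Fintype.card (Fin 3) = finrank ℚ K := by rw [hdim, Fintype.card_fin]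
  have hli : LinearIndependent ℚ (cubicFamily a b ζ) := linearIndependent_cubicFamily ha b hdeg
  let B := basisOfLinearIndependentOfCardEqFinrank hli hcard
  have hB : ⇑B = cubicFamily a b ζ := coe_basisOfLinearIndependentOfCardEqFinrank _ _
  rw [Algebra.norm_eq_matrix_det B, Algebra.leftMulMatrix_eq_of_mul_eq_sum B]
  intro j
  rw [hB]
  exact mul_cubicFamily hζ u x y j

/-- In a cubic field `K = ℚ(ζ)` with `ζ` a root of `aX³ + bX² + cX + d`,
the norm of `α = u + x·(aζ) + y·(aζ² + bζ)` equals `det N(u,x,y)`. -/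
theorem norm_eq_det_cubic_field {K : Type*} [Field K] [Algebra ℚ K]
    [FiniteDimensional ℚ K] (hdim : Module.finrank ℚ K = 3)
    (a b c d : ℚ) (ha : a ≠ 0) (ζ : K)
    (hζ : algebraMap ℚ K a * ζ ^ 3 + algebraMap ℚ K b * ζ ^ 2 +
      algebraMap ℚ K c * ζ + algebraMap ℚ K d = 0)
    (hgen : ∀ q : ℚ, ζ ≠ algebraMap ℚ K q)
    (u x y : ℚ) :
    Algebra.norm ℚ
        (algebraMap ℚ K u + algebraMap ℚ K x * (algebraMap ℚ K a * ζ) +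
          algebraMap ℚ K y * (algebraMap ℚ K a * ζ ^ 2 + algebraMap ℚ K b * ζ)) =
      (!![u, -a * d * y, -a * d * x - b * d * y;
          x, u - b * x - c * y, -c * x - d * y;
          y, a * x, u - c * y] : Matrix (Fin 3) (Fin 3) ℚ).det :=
  norm_eq_det_cubic_field_general hdim a b c d ha ζ hζ hgen u x y
end
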